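/- arXiv:2005.12013 — 3 statements merged into one kernel-verified Lean document; each statement's English description precedes it below -/
import Mathlib

section
/- Define Γ: {(x,y) ∈ ℝ² : x² + y² < 1} → ℝ by Γ(x,y) = (x² + y²)^{1/2} · (−(1/2)·ln(x² + y²))^{−3/2} for 0 < x² + y² < 1 and Γ(0,0) = 0. Then Γ is continuously differentiable on the open unit disk, Γ(0,0) = 0, and both partial derivatives of Γ at the origin are zero (so the total derivative of Γ at the origin is the zero map). -/
open Set Filter

noncomputable section

/-- The function `Γ(x,y) = (x²+y²)^{1/2} ⬝ (−(1/2) ln(x²+y²))^{−3/2}` for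
`x²+y² ≠ 0`, and `Γ(0,0) = 0`. -/
noncomputable def GammaFn (p : ℝ × ℝ) : ℝ :=
  if p.1 ^ 2 + p.2 ^ 2 = 0 then 0
  else (p.1 ^ 2 + p.2 ^ 2) ^ ((1 : ℝ) / 2) *
    (-(1 / 2) * Real.log (p.1 ^ 2 + p.2 ^ 2)) ^ (-(3 : ℝ) / 2)

/-!
Write `Γ(p) = g(x² + y²)` with `g t = √t · ℓ(t)^(-3/2)` and `ℓ(t) = -(1/2) log t`, which tends to
`∞` as `t → 0`. Since `ℓ^(-3/2) → 0`, `g(t) = o(√t)`, hence `Γ(p) = o(‖p‖)` and `DΓ(0) = 0`.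
Away from the origin `DΓ(p) = g'(t) (2x dx + 2y dy)` has norm at most
`4 √t |g'(t)| = 4 (ℓ^(-3/2)/2 + 3 ℓ^(-5/2)/4)`, which tends to `0`, so `DΓ` is continuous at the
origin as well.
-/

open Real Topology Asymptotics

section ContDiffExtension

variable {𝕜 E F : Type*} [NontriviallyNormedField 𝕜] [NormedAddCommGroup E] [NormedSpace 𝕜 E]
  [NormedAddCommGroup F] [NormedSpace 𝕜 F]

theorem contDiffAt_one_of_tendsto_fderiv {f : E → F} {x : E} {f' : E →L[𝕜] F}
    (hf : ∀ᶠ y in 𝓝[≠] x, ContDiffAt 𝕜 1 f y) (hx : HasFDerivAt f f' x)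
    (hf' : Tendsto (fderiv 𝕜 f) (𝓝[≠] x) (𝓝 f')) : ContDiffAt 𝕜 1 f x := by
  rw [contDiffAt_one_iff]
  refine ⟨fderiv 𝕜 f, {y | y ≠ x → ContDiffAt 𝕜 1 f y}, eventually_nhdsWithin_iff.1 hf, ?_, ?_⟩
  · intro y hy
    rcases eq_or_ne y x with rfl | hne
    · exact (continuousWithinAt_compl_self.1
        (by rwa [ContinuousWithinAt, hx.fderiv])).continuousWithinAt
    · exact ((hy hne).fderiv_right (m := 0) le_rfl).continuousAt.continuousWithinAt
  · intro y hy
    rcases eq_or_ne y x with rfl | hne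
    · rwa [hx.fderiv]
    · exact ((hy hne).differentiableAt one_ne_zero).hasFDerivAt

end ContDiffExtension

lemma sq_add_sq_pos {p : ℝ × ℝ} (hp : p ≠ 0) : 0 < p.1 ^ 2 + p.2 ^ 2 := by
  have : p.1 ≠ 0 ∨ p.2 ≠ 0 := by
    contrapose! hp
    simp [Prod.ext_iff, hp]
  rcases this with h | h <;> positivity

lemma norm_le_sqrt_sq_add_sq (p : ℝ × ℝ) : ‖p‖ ≤ √(p.1 ^ 2 + p.2 ^ 2) :=
  max_le (abs_le_sqrt (by nlinarith)) (abs_le_sqrt (by nlinarith))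

lemma sqrt_sq_add_sq_le (p : ℝ × ℝ) : √(p.1 ^ 2 + p.2 ^ 2) ≤ √2 * ‖p‖ := by
  have h1 : |p.1| ≤ ‖p‖ := norm_fst_le p
  have h2 : |p.2| ≤ ‖p‖ := norm_snd_le p
  rw [← sqrt_sq (norm_nonneg p), ← sqrt_mul zero_le_two]
  gcongr
  nlinarith [sq_abs p.1, sq_abs p.2, abs_nonneg p.1, abs_nonneg p.2]

lemma tendsto_sq_add_sq_nhdsGT :
    Tendsto (fun p : ℝ × ℝ => p.1 ^ 2 + p.2 ^ 2) (𝓝[≠] 0) (𝓝[>] 0) := by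
  refine tendsto_nhdsWithin_iff.2 ⟨?_, ?_⟩
  · exact (Continuous.tendsto' (by fun_prop) 0 0 (by simp)).mono_left nhdsWithin_le_nhds
  · filter_upwards [self_mem_nhdsWithin] with p hp using sq_add_sq_pos hp

lemma hasFDerivAt_sq_add_sq (p : ℝ × ℝ) :
    HasFDerivAt (fun q : ℝ × ℝ => q.1 ^ 2 + q.2 ^ 2)
      ((2 * p.1) • ContinuousLinearMap.fst ℝ ℝ ℝ + (2 * p.2) • ContinuousLinearMap.snd ℝ ℝ ℝ)
      p := by
  refine (((hasFDerivAt_fst (p := p)).pow 2).add ((hasFDerivAt_snd (p := p)).pow 2)).congr_fderiv ?_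
  ext <;> simp

lemma norm_fderiv_sq_add_sq_le (p : ℝ × ℝ) :
    ‖(2 * p.1) • ContinuousLinearMap.fst ℝ ℝ ℝ + (2 * p.2) • ContinuousLinearMap.snd ℝ ℝ ℝ‖ ≤
      4 * ‖p‖ := by
  refine (norm_add_le _ _).trans ?_
  rw [norm_smul, norm_smul]
  have h1 : |p.1| ≤ ‖p‖ := norm_fst_le p
  have h2 : |p.2| ≤ ‖p‖ := norm_snd_le p
  have hfst := ContinuousLinearMap.norm_fst_le ℝ ℝ ℝ
  have hsnd := ContinuousLinearMap.norm_snd_le ℝ ℝ ℝ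
  simp only [Real.norm_eq_abs, abs_mul, abs_two]
  nlinarith [norm_nonneg (ContinuousLinearMap.fst ℝ ℝ ℝ),
    norm_nonneg (ContinuousLinearMap.snd ℝ ℝ ℝ), abs_nonneg p.1, abs_nonneg p.2]

section ComposeSumOfSquares

variable {g : ℝ → ℝ}

lemma hasFDerivAt_comp_sq_add_sq_zero (hg : g =o[𝓝 0] sqrt) :
    HasFDerivAt (fun p : ℝ × ℝ => g (p.1 ^ 2 + p.2 ^ 2)) (0 : ℝ × ℝ →L[ℝ] ℝ) 0 := by
  have hr : Tendsto (fun p : ℝ × ℝ => p.1 ^ 2 + p.2 ^ 2) (𝓝 0) (𝓝 0) :=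
    Continuous.tendsto' (by fun_prop) 0 0 (by simp)
  have hg0 : g 0 = 0 := by simpa using hg.isBigO.eq_zero_imp.self_of_nhds
  rw [hasFDerivAt_iff_isLittleO_nhds_zero]
  simp only [zero_add, Prod.fst_zero, Prod.snd_zero, zero_pow two_ne_zero, hg0, sub_zero,
    zero_apply]
  exact (hg.comp_tendsto hr).trans_isBigO (isBigO_of_le' _ fun p => by
    simpa [abs_of_nonneg (sqrt_nonneg _)] using sqrt_sq_add_sq_le p)

lemma tendsto_fderiv_comp_sq_add_sq_zero (hd : ∀ᶠ t in 𝓝[>] 0, DifferentiableAt ℝ g t)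
    (hlim : Tendsto (fun t => √t * deriv g t) (𝓝[>] 0) (𝓝 0)) :
    Tendsto (fderiv ℝ fun p : ℝ × ℝ => g (p.1 ^ 2 + p.2 ^ 2)) (𝓝[≠] 0) (𝓝 0) := by
  have hbound : Tendsto (fun p : ℝ × ℝ => 4 * ‖√(p.1 ^ 2 + p.2 ^ 2) * deriv g (p.1 ^ 2 + p.2 ^ 2)‖)
      (𝓝[≠] 0) (𝓝 0) := by
    simpa using ((hlim.comp tendsto_sq_add_sq_nhdsGT).norm.const_mul 4)
  refine squeeze_zero_norm' ?_ hbound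
  filter_upwards [tendsto_sq_add_sq_nhdsGT.eventually hd] with p hp
  set t := p.1 ^ 2 + p.2 ^ 2
  have hD : HasFDerivAt (fun q : ℝ × ℝ => g (q.1 ^ 2 + q.2 ^ 2))
      (deriv g t • ((2 * p.1) • ContinuousLinearMap.fst ℝ ℝ ℝ +
        (2 * p.2) • ContinuousLinearMap.snd ℝ ℝ ℝ)) p :=
    hp.hasDerivAt.comp_hasFDerivAt p (hasFDerivAt_sq_add_sq p)
  rw [hD.fderiv, norm_smul, norm_mul, norm_of_nonneg (sqrt_nonneg t)]
  calc ‖deriv g t‖ * ‖(2 * p.1) • ContinuousLinearMap.fst ℝ ℝ ℝ +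
        (2 * p.2) • ContinuousLinearMap.snd ℝ ℝ ℝ‖
      ≤ ‖deriv g t‖ * (4 * √t) := by
        gcongr
        exact (norm_fderiv_sq_add_sq_le p).trans (by gcongr; exact norm_le_sqrt_sq_add_sq p)
    _ = 4 * (√t * ‖deriv g t‖) := by ring

theorem contDiffAt_comp_sq_add_sq_zero (hg : g =o[𝓝 0] sqrt)
    (hc : ∀ᶠ t in 𝓝[>] 0, ContDiffAt ℝ 1 g t)
    (hlim : Tendsto (fun t => √t * deriv g t) (𝓝[>] 0) (𝓝 0)) :
    ContDiffAt ℝ 1 (fun p : ℝ × ℝ => g (p.1 ^ 2 + p.2 ^ 2)) 0 :=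
  contDiffAt_one_of_tendsto_fderiv
    ((tendsto_sq_add_sq_nhdsGT.eventually hc).mono fun p hp => hp.comp p (by fun_prop))
    (hasFDerivAt_comp_sq_add_sq_zero hg)
    (tendsto_fderiv_comp_sq_add_sq_zero (hc.mono fun _ ht => ht.differentiableAt one_ne_zero) hlim)

end ComposeSumOfSquares

def gammaProfile (t : ℝ) : ℝ := √t * (-(1 / 2) * log t) ^ (-(3 : ℝ) / 2)

lemma gammaFn_eq : GammaFn = fun p => gammaProfile (p.1 ^ 2 + p.2 ^ 2) := by
  funext p
  rw [GammaFn, gammaProfile, sqrt_eq_rpow]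
  split_ifs with h
  · simp [h]
  · rfl

lemma neg_half_log_pos {t : ℝ} (h0 : 0 < t) (h1 : t < 1) : 0 < -(1 / 2) * log t := by
  nlinarith [log_neg h0 h1]

lemma tendsto_rpow_neg_half_log {a : ℝ} (ha : a < 0) :
    Tendsto (fun t => (-(1 / 2) * log t) ^ a) (𝓝 0) (𝓝 0) := by
  -- at `t = 0` the junk values `log 0 = 0` and `0 ^ a = 0` agree with the limit
  nth_rw 1 [← nhdsNE_sup_pure (0 : ℝ)]
  refine tendsto_sup.2 ⟨?_, tendsto_pure_left.2 fun s hs => ?_⟩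
  · have hL : Tendsto (fun t => -(1 / 2) * log t) (𝓝[≠] 0) atTop :=
      tendsto_log_nhdsNE_zero.const_mul_atBot_of_neg (by norm_num)
    have := (tendsto_rpow_neg_atTop (neg_pos.2 ha)).comp hL
    rwa [neg_neg] at this
  · simpa [zero_rpow ha.ne] using mem_of_mem_nhds hs

lemma gammaProfile_isLittleO_sqrt : gammaProfile =o[𝓝 0] sqrt := by
  have := (isBigO_refl sqrt (𝓝 0)).mul_isLittleO
    ((isLittleO_one_iff ℝ).2 (tendsto_rpow_neg_half_log (by norm_num : -(3 : ℝ) / 2 < 0)))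
  simp only [mul_one] at this
  exact this

lemma hasDerivAt_gammaProfile {t : ℝ} (h0 : 0 < t) (h1 : t < 1) :
    HasDerivAt gammaProfile ((1 / 2 * (-(1 / 2) * log t) ^ (-(3 : ℝ) / 2) +
      3 / 4 * (-(1 / 2) * log t) ^ (-(5 : ℝ) / 2)) / √t) t := by
  have hL := (((hasDerivAt_log h0.ne').const_mul (-(1 / 2) : ℝ)).rpow_const
    (p := -(3 : ℝ) / 2) (Or.inl (neg_half_log_pos h0 h1).ne'))
  refine ((hasDerivAt_sqrt h0.ne').mul hL).congr_deriv ?_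
  rw [show -(3 : ℝ) / 2 - 1 = -(5 : ℝ) / 2 by norm_num]
  field_simp
  rw [sq_sqrt h0.le]
  ring

lemma contDiffAt_gammaProfile {t : ℝ} (h0 : 0 < t) (h1 : t < 1) :
    ContDiffAt ℝ 1 gammaProfile t :=
  (contDiffAt_sqrt h0.ne').mul ((contDiffAt_rpow_const_of_ne (neg_half_log_pos h0 h1).ne').comp t
    (contDiffAt_const.mul (contDiffAt_log.2 h0.ne')))

lemma tendsto_sqrt_mul_deriv_gammaProfile :
    Tendsto (fun t => √t * deriv gammaProfile t) (𝓝[>] 0) (𝓝 0) := by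
  have hlim := (((tendsto_rpow_neg_half_log (by norm_num : -(3 : ℝ) / 2 < 0)).const_mul (1 / 2)).add
    ((tendsto_rpow_neg_half_log (by norm_num : -(5 : ℝ) / 2 < 0)).const_mul (3 / 4))).mono_left
    (nhdsWithin_le_nhds (s := Ioi 0))
  rw [mul_zero, mul_zero, add_zero] at hlim
  refine hlim.congr' ?_
  filter_upwards [Ioo_mem_nhdsGT one_pos] with t ⟨h0, h1⟩
  rw [(hasDerivAt_gammaProfile h0 h1).deriv, mul_div_cancel₀ _ (sqrt_pos.2 h0).ne']

lemma contDiffOn_gammaFn : ContDiffOn ℝ 1 GammaFn {p : ℝ × ℝ | p.1 ^ 2 + p.2 ^ 2 < 1} := by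
  intro p hp
  rw [gammaFn_eq]
  refine ContDiffAt.contDiffWithinAt ?_
  rcases eq_or_ne p 0 with rfl | hp0
  · refine contDiffAt_comp_sq_add_sq_zero gammaProfile_isLittleO_sqrt ?_
      tendsto_sqrt_mul_deriv_gammaProfile
    filter_upwards [Ioo_mem_nhdsGT one_pos] with t ⟨h0, h1⟩ using contDiffAt_gammaProfile h0 h1
  · exact (contDiffAt_gammaProfile (sq_add_sq_pos hp0) hp).comp
      (f := fun q : ℝ × ℝ => q.1 ^ 2 + q.2 ^ 2) p (by fun_prop)

/-- `Γ` is continuously differentiable on the open unit disk, vanishes at the origin,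
and both of its partial derivatives at the origin vanish, so its total derivative at the
origin is the zero map. -/
theorem stmt8 :
    ContDiffOn ℝ 1 GammaFn {p : ℝ × ℝ | p.1 ^ 2 + p.2 ^ 2 < 1} ∧
    GammaFn (0, 0) = 0 ∧
    fderiv ℝ GammaFn (0, 0) (1, 0) = 0 ∧
    fderiv ℝ GammaFn (0, 0) (0, 1) = 0 ∧
    fderiv ℝ GammaFn (0, 0) = 0 := by
  have hfd0 : fderiv ℝ GammaFn (0, 0) = 0 := by
    rw [gammaFn_eq]
    exact (hasFDerivAt_comp_sq_add_sq_zero gammaProfile_isLittleO_sqrt).fderiv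
  exact ⟨contDiffOn_gammaFn, by simp [GammaFn], by simp [hfd0], by simp [hfd0], hfd0⟩
end
end

section
/- Let m be a positive integer and define f(x,ε) = x·∏_{i=1}^{m}(x² − (iε/m)²) and F(x,ε) = x + ε·∂f/∂x(x,ε). Then there exist ε₂ > 0 and a continuous function x: [0, ε₂) → ℝ with x(0) = 0 and F(x(ε), ε) = 0 for all ε ∈ [0, ε₂); moreover, as ε → 0⁺, x(ε) = (−1)^{m+1} · ((m!)²/m^{2m}) · ε^{2m+1} + O(ε^{2m+2}). -/
open Set Filter

noncomputable section

/-- The polynomial `f(x, ε) = x ⬝ ∏_{i=1}^{m} (x² − (iε/m)²)`. -/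
noncomputable def fPol (m : ℕ) (x ε : ℝ) : ℝ :=
  x * ∏ i ∈ Finset.Icc 1 m, (x ^ 2 - ((i : ℝ) * ε / (m : ℝ)) ^ 2)

/-!
Zeros of `F` are the fixed points of `T_ε x = -ε φ(ε, x)` with `φ(ε, x) = ∂f/∂x(x, ε)`. Being a
polynomial, `φ` is C¹, hence uniformly Lipschitz in `x` on `[0, 1] × [-1, 1]`; for small `ε` the
map `T_ε` is then a `1/2`-contraction of `[-1, 1]` whose fixed point moves continuously with `ε`.
The same Lipschitz bound gives `x(ε) = -ε φ(ε, 0) + O(ε² φ(ε, 0))`, and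
`φ(ε, 0) = ∏ᵢ (-(iε/m)²) = (-1)^m (m!)² ε^{2m} / m^{2m}`.
-/

open Function Asymptotics Topology NNReal

theorem continuousOn_of_isFixedPt_of_lipschitzOnWith {P α : Type*} [TopologicalSpace P]
    [PseudoMetricSpace α] {T : P → α → α} {x : P → α} {S : Set P} {s : Set α} {K : ℝ≥0}
    (hK : K < 1) (hT : ∀ p ∈ S, LipschitzOnWith K (T p) s) (hxs : ∀ p ∈ S, x p ∈ s)
    (hx : ∀ p ∈ S, IsFixedPt (T p) (x p)) (hcont : ∀ y ∈ s, ContinuousOn (fun p ↦ T p y) S) :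
    ContinuousOn x S := by
  intro p₀ hp₀
  have hK' : (0 : ℝ) < 1 - K := sub_pos.2 (by exact_mod_cast hK)
  have hdist : ∀ p ∈ S, dist (x p) (x p₀) ≤ dist (T p (x p₀)) (x p₀) / (1 - K) := by
    intro p hp
    rw [le_div_iff₀ hK']
    have hlip := (hT p hp).dist_le_mul _ (hxs p hp) _ (hxs p₀ hp₀)
    have htri := dist_triangle (T p (x p)) (T p (x p₀)) (x p₀)
    rw [(hx p hp).eq] at htri hlip
    nlinarith
  rw [ContinuousWithinAt, tendsto_iff_dist_tendsto_zero]
  refine squeeze_zero' (.of_forall fun _ ↦ dist_nonneg) (eventually_nhdsWithin_of_forall hdist) ?_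
  simpa [(hx p₀ hp₀).eq] using
    ((hcont _ (hxs p₀ hp₀) p₀ hp₀).dist (continuousWithinAt_const (b := x p₀))).div_const (1 - K)

theorem LipschitzOnWith.uncurry_left {α β γ : Type*} [PseudoEMetricSpace α]
    [PseudoEMetricSpace β] [PseudoEMetricSpace γ] {f : α → β → γ} {K : ℝ≥0} {s : Set α}
    {t : Set β} (hf : LipschitzOnWith K (uncurry f) (s ×ˢ t)) {a : α} (ha : a ∈ s) :
    LipschitzOnWith K (f a) t := by
  simpa [Function.comp_def] using
    hf.comp (LipschitzWith.prodMk_left a).lipschitzOnWith fun _ hb ↦ mk_mem_prod ha hb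

section ZeroBranch

variable {φ : ℝ → ℝ → ℝ} {L : ℝ≥0} {ε : ℝ}

theorem abs_add_mul_apply_zero_le (hL : LipschitzOnWith L (φ ε) (Icc (-1) 1)) (hε : 0 ≤ ε)
    (hεL : ε * L ≤ 1 / 2) {x : ℝ} (hx : x ∈ Icc (-1) 1) (hzero : x + ε * φ ε x = 0) :
    |x + ε * φ ε 0| ≤ 2 * L * ε ^ 2 * |φ ε 0| := by
  have hlin : |x + ε * φ ε 0| ≤ ε * L * |x| := by
    have hlip := hL.dist_le_mul _ hx 0 (by norm_num)
    rw [Real.dist_eq, Real.dist_eq, sub_zero] at hlip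
    rw [show x + ε * φ ε 0 = -(ε * (φ ε x - φ ε 0)) by linarith, abs_neg, abs_mul,
      abs_of_nonneg hε, mul_assoc]
    exact mul_le_mul_of_nonneg_left hlip hε
  have hx_le : |x| ≤ 2 * ε * |φ ε 0| := by
    have htri : |x| ≤ |x + ε * φ ε 0| + ε * |φ ε 0| := by
      simpa [abs_mul, abs_of_nonneg hε] using abs_sub (x + ε * φ ε 0) (ε * φ ε 0)
    nlinarith [mul_le_mul_of_nonneg_right hεL (abs_nonneg x)]
  calc |x + ε * φ ε 0| ≤ ε * L * |x| := hlin
    _ ≤ ε * L * (2 * ε * |φ ε 0|) := by gcongr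
    _ = 2 * L * ε ^ 2 * |φ ε 0| := by ring

theorem exists_continuousOn_zero_branch {δ B : ℝ}
    (hcont : ∀ y ∈ Icc (-1 : ℝ) 1, ContinuousOn (fun ε ↦ φ ε y) (Icc 0 δ))
    (hL : ∀ ε ∈ Icc 0 δ, LipschitzOnWith L (φ ε) (Icc (-1) 1))
    (hB : ∀ ε ∈ Icc 0 δ, ∀ y ∈ Icc (-1 : ℝ) 1, |φ ε y| ≤ B) (hδL : δ * L ≤ 1 / 2)
    (hδB : δ * B ≤ 1) :
    ∃ x : ℝ → ℝ, ContinuousOn x (Icc 0 δ) ∧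
      ∀ ε ∈ Icc 0 δ, x ε ∈ Icc (-1) 1 ∧ x ε + ε * φ ε (x ε) = 0 := by
  set T : ℝ → ℝ → ℝ := fun ε y ↦ -(ε * φ ε y)
  have hT : ∀ ε ∈ Icc 0 δ, LipschitzOnWith (1 / 2) (T ε) (Icc (-1) 1) := by
    intro ε hε
    refine LipschitzOnWith.of_dist_le_mul fun y hy z hz ↦ ?_
    have hlip := (hL ε hε).dist_le_mul y hy z hz
    have hεL : ε * L ≤ 1 / 2 := (mul_le_mul_of_nonneg_right hε.2 L.2).trans hδL
    simp only [Real.dist_eq] at hlip ⊢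
    rw [show T ε y - T ε z = -(ε * (φ ε y - φ ε z)) by ring, abs_neg, abs_mul,
      abs_of_nonneg hε.1]
    push_cast
    calc ε * |φ ε y - φ ε z| ≤ ε * (L * |y - z|) := by gcongr; exact hε.1
      _ = ε * L * |y - z| := by ring
      _ ≤ 1 / 2 * |y - z| := by gcongr
  have hmaps : ∀ ε ∈ Icc 0 δ, MapsTo (T ε) (Icc (-1) 1) (Icc (-1) 1) := by
    intro ε hε y hy
    have hεB : ε * |φ ε y| ≤ 1 :=
      le_trans (mul_le_mul hε.2 (hB ε hε y hy) (abs_nonneg _) (hε.1.trans hε.2)) hδB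
    rw [mem_Icc, ← abs_le, abs_neg, abs_mul, abs_of_nonneg hε.1]
    exact hεB
  have hfix : ∀ ε, ∃ y, ε ∈ Icc 0 δ → y ∈ Icc (-1 : ℝ) 1 ∧ IsFixedPt (T ε) y := by
    intro ε
    by_cases hε : ε ∈ Icc 0 δ
    · obtain ⟨y, hy, hfy, -⟩ := ContractingWith.exists_fixedPoint' isClosed_Icc.isComplete
        (hmaps ε hε) ⟨by norm_num, (hT ε hε).mapsToRestrict _⟩ (x := 0) (by norm_num)
        (edist_ne_top _ _)
      exact ⟨y, fun _ ↦ ⟨hy, hfy⟩⟩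
    · exact ⟨0, fun h ↦ (hε h).elim⟩
  choose x hx using hfix
  refine ⟨x, continuousOn_of_isFixedPt_of_lipschitzOnWith (by norm_num) hT
    (fun ε hε ↦ (hx ε hε).1) (fun ε hε ↦ (hx ε hε).2)
    (fun y hy ↦ (continuousOn_id.mul (hcont y hy)).neg), fun ε hε ↦ ⟨(hx ε hε).1, ?_⟩⟩
  have := (hx ε hε).2.eq
  simp only [T] at this
  linarith

theorem exists_continuousOn_zero_branch_of_contDiff (hφ : ContDiff ℝ 1 (uncurry φ)) :
    ∃ δ > 0, ∃ x : ℝ → ℝ, ContinuousOn x (Icc 0 δ) ∧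
      (∀ ε ∈ Icc 0 δ, x ε + ε * φ ε (x ε) = 0) ∧
      (fun ε ↦ x ε + ε * φ ε 0) =O[𝓝[≥] 0] fun ε ↦ ε ^ 2 * φ ε 0 := by
  have hR : IsCompact (Icc (0 : ℝ) 1 ×ˢ Icc (-1 : ℝ) 1) := isCompact_Icc.prod isCompact_Icc
  obtain ⟨L, hL⟩ := hφ.locallyLipschitz.locallyLipschitzOn.exists_lipschitzOnWith_of_compact hR
  obtain ⟨B, hB⟩ := hR.exists_bound_of_continuousOn hφ.continuous.continuousOn
  have hB0 : 0 ≤ B := (norm_nonneg _).trans (hB (0, 0) (by norm_num))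
  set δ : ℝ := (2 * L + B + 1)⁻¹
  have hδ : 0 < δ := by positivity
  have hδ1 : δ * (2 * L + B + 1) = 1 := inv_mul_cancel₀ (by positivity)
  have hsub : Icc 0 δ ⊆ Icc (0 : ℝ) 1 := Icc_subset_Icc_right (by nlinarith [L.2])
  have hLδ : ∀ ε ∈ Icc 0 δ, LipschitzOnWith L (φ ε) (Icc (-1) 1) :=
    fun ε hε ↦ hL.uncurry_left (hsub hε)
  have hcont : ∀ y, Continuous fun ε ↦ φ ε y :=
    fun y ↦ hφ.continuous.comp (.prodMk continuous_id continuous_const)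
  have hδL : δ * L ≤ 1 / 2 := by nlinarith [L.2]
  obtain ⟨x, hxc, hx⟩ := exists_continuousOn_zero_branch (fun y _ ↦ (hcont y).continuousOn) hLδ
    (fun ε hε y hy ↦ hB (ε, y) ⟨hsub hε, hy⟩) hδL (by nlinarith [L.2])
  refine ⟨δ, hδ, x, hxc, fun ε hε ↦ (hx ε hε).2, IsBigO.of_bound (2 * L) ?_⟩
  filter_upwards [Icc_mem_nhdsGE hδ] with ε hε
  rw [Real.norm_eq_abs, Real.norm_eq_abs, abs_mul, abs_pow, abs_of_nonneg hε.1, ← mul_assoc]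
  exact abs_add_mul_apply_zero_le (hLδ ε hε) hε.1
    ((mul_le_mul_of_nonneg_right hε.2 L.2).trans hδL)
    (hx ε hε).1 (hx ε hε).2

end ZeroBranch

theorem contDiff_uncurry_deriv {g : ℝ → ℝ → ℝ} {n : WithTop ℕ∞}
    (hg : ContDiff ℝ (n + 1) (uncurry g)) : ContDiff ℝ n (uncurry fun ε ↦ deriv (g ε)) :=
  (ContDiff.fderiv (f := fun p : ℝ × ℝ ↦ g p.1) (hg.comp (contDiff_fst.fst.prodMk contDiff_snd))
    contDiff_snd le_rfl).clm_apply contDiff_const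

theorem contDiff_fPol (m : ℕ) : ContDiff ℝ ⊤ (uncurry fun ε u ↦ fPol m u ε) := by
  unfold fPol
  fun_prop

theorem deriv_fPol_zero (m : ℕ) (ε : ℝ) :
    deriv (fun u ↦ fPol m u ε) 0 =
      (-1) ^ m * ((m.factorial : ℝ) ^ 2 / (m : ℝ) ^ (2 * m)) * ε ^ (2 * m) := by
  set Q : ℝ → ℝ := fun u ↦ ∏ i ∈ Finset.Icc 1 m, (u ^ 2 - ((i : ℝ) * ε / m) ^ 2)
  have hQ : DifferentiableAt ℝ Q 0 := by fun_prop
  have hd := (hasDerivAt_id' (0 : ℝ)).fun_mul hQ.hasDerivAt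
  simp only [zero_mul, add_zero, one_mul] at hd
  rw [show (fun u ↦ fPol m u ε) = fun u ↦ u * Q u from rfl, hd.deriv]
  calc Q 0 = ∏ i ∈ Finset.Icc 1 m, (-(ε / m) ^ 2 * (i : ℝ) ^ 2) :=
        Finset.prod_congr rfl fun i _ ↦ by ring
    _ = (-(ε / m) ^ 2) ^ m * (m.factorial : ℝ) ^ 2 := by
        rw [Finset.prod_mul_distrib, Finset.prod_const, Nat.card_Icc, Nat.add_sub_cancel,
          Finset.prod_pow, ← Nat.cast_prod, ← Finset.Ico_add_one_right_eq_Icc,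
          Finset.prod_Ico_id_eq_factorial]
    _ = _ := by ring

theorem stmt13_general (m : ℕ) :
    ∃ ε₂ > (0 : ℝ), ∃ x : ℝ → ℝ,
      ContinuousOn x (Set.Ico 0 ε₂) ∧ x 0 = 0 ∧
      (∀ ε ∈ Set.Ico (0 : ℝ) ε₂,
        x ε + ε * deriv (fun u : ℝ => fPol m u ε) (x ε) = 0) ∧
      ∃ C : ℝ, ∀ᶠ ε in nhdsWithin (0 : ℝ) (Set.Ioi 0),
        |x ε - (-1 : ℝ) ^ (m + 1) *
            ((m.factorial : ℝ) ^ 2 / (m : ℝ) ^ (2 * m)) * ε ^ (2 * m + 1)| ≤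
          C * ε ^ (2 * m + 2) := by
  obtain ⟨δ, hδ, x, hxc, hx, hO⟩ := exists_continuousOn_zero_branch_of_contDiff
    (contDiff_uncurry_deriv ((contDiff_fPol m).of_le le_top))
  refine ⟨δ, hδ, x, hxc.mono Ico_subset_Icc_self, by simpa using hx 0 ⟨le_rfl, hδ.le⟩,
    fun ε hε ↦ hx ε (Ico_subset_Icc_self hε), ?_⟩
  simp only [deriv_fPol_zero] at hO
  set K : ℝ := (m.factorial : ℝ) ^ 2 / (m : ℝ) ^ (2 * m)
  have hf (ε : ℝ) : x ε + ε * ((-1) ^ m * K * ε ^ (2 * m)) =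
      x ε - (-1) ^ (m + 1) * K * ε ^ (2 * m + 1) := by ring
  have hg (ε : ℝ) : ε ^ 2 * ((-1) ^ m * K * ε ^ (2 * m)) = (-1) ^ m * K * ε ^ (2 * m + 2) := by
    ring
  simp only [hf, hg] at hO
  obtain ⟨C, hC⟩ := ((hO.trans (isBigO_const_mul_self _ _ _)).mono
    (nhdsWithin_mono _ Ioi_subset_Ici_self)).bound
  refine ⟨C, ?_⟩
  filter_upwards [hC, self_mem_nhdsWithin] with ε hε hε0
  rwa [Real.norm_eq_abs, Real.norm_of_nonneg (pow_nonneg (le_of_lt hε0) _)] at hε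

/-- For `F(x,ε) = x + ε ∂f/∂x(x,ε)` there is a continuous branch `x(ε)` of zeros of `F`
with `x(0) = 0` and the asymptotics
`x(ε) = (−1)^{m+1} ((m!)²/m^{2m}) ε^{2m+1} + O(ε^{2m+2})` as `ε → 0⁺`. -/
theorem stmt13 (m : ℕ) (hm : 0 < m) :
    ∃ ε₂ > (0 : ℝ), ∃ x : ℝ → ℝ,
      ContinuousOn x (Set.Ico 0 ε₂) ∧ x 0 = 0 ∧
      (∀ ε ∈ Set.Ico (0 : ℝ) ε₂,
        x ε + ε * deriv (fun u : ℝ => fPol m u ε) (x ε) = 0) ∧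
      ∃ C : ℝ, ∀ᶠ ε in nhdsWithin (0 : ℝ) (Set.Ioi 0),
        |x ε - (-1 : ℝ) ^ (m + 1) *
            ((m.factorial : ℝ) ^ 2 / (m : ℝ) ^ (2 * m)) * ε ^ (2 * m + 1)| ≤
          C * ε ^ (2 * m + 2) :=
  stmt13_general m
end
end

section
/- Let m be a positive integer, f(x,ε) = x·∏_{k=1}^{m}(x² − (kε/m)²), ε > 0, and i ∈ {1,…,m}. Suppose P is a real-valued function defined on a neighborhood of iε/m, differentiable at iε/m, with P(iε/m) = iε/m, P(x) > 0 near iε/m, and satisfying (1/2)x² − ε f(x,ε) = (1/2)P(x)² + ε f(P(x),ε) for all x near iε/m. Then P'(iε/m) = (1 − 2ε^{2m}·(i/m)·∏_{k=1,k≠i}^{m}((i/m)² − (k/m)²)) / (1 + 2ε^{2m}·(i/m)·∏_{k=1,k≠i}^{m}((i/m)² − (k/m)²)). Consequently, for all sufficiently small ε > 0, P'(iε/m) ≠ 1 (the fixed point iε/m is hyperbolic), with 0 < P'(iε/m) < 1 if m − i is even and P'(iε/m) > 1 if m − i is odd. -/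
/-!
Write `c = iε/m`. Differentiating the energy identity at the fixed point gives
`c - ε f'(c) = (c + ε f'(c)) P'(c)`. Since `c` is a simple root of `f(·, ε)`, only one term of
the product rule survives and `ε f'(c) = c A` with `A = 2 ε^{2m} (i/m) ∏_{k ≠ i} ((i/m)² - (k/m)²)`,
whence `P'(c) = (1 - A) / (1 + A)`. The product has the sign `(-1)^(m-i)` of its `m - i` negative
factors, and `A → 0` as `ε → 0`, which decides on which side of `1` the derivative lies.
-/

open Set Filter

noncomputable section

open Topology

theorem HasDerivAt.finsetProd_of_eq_zero {𝕜 𝔸 ι : Type*} [NontriviallyNormedField 𝕜]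
    [NormedCommRing 𝔸] [NormedAlgebra 𝕜 𝔸] [DecidableEq ι] {u : Finset ι} {f : ι → 𝕜 → 𝔸}
    {f' : ι → 𝔸} {x : 𝕜} {i : ι} (hi : i ∈ u) (hf : ∀ j ∈ u, HasDerivAt (f j) (f' j) x)
    (hfi : f i x = 0) :
    HasDerivAt (∏ j ∈ u, f j ·) ((∏ j ∈ u.erase i, f j x) • f' i) x := by
  convert HasDerivAt.fun_finsetProd hf using 1
  refine (Finset.sum_eq_single_of_mem (f := fun j => (∏ k ∈ u.erase j, f k x) • f' j) i hi
    fun j _ hji => ?_).symm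
  rw [Finset.prod_eq_zero (Finset.mem_erase.mpr ⟨Ne.symm hji, hi⟩) hfi, zero_smul]

theorem eq_mul_deriv_of_eventuallyEq_comp {𝕜 : Type*} [NontriviallyNormedField 𝕜]
    {L R P : 𝕜 → 𝕜} {L' R' c : 𝕜} (hL : HasDerivAt L L' c) (hR : HasDerivAt R R' (P c))
    (hP : DifferentiableAt 𝕜 P c) (h : L =ᶠ[𝓝 c] R ∘ P) : L' = R' * deriv P c :=
  hL.unique ((hR.comp c hP.hasDerivAt).congr_of_eventuallyEq h)

theorem neg_one_pow_mul_prod_erase_sub_pos {a : ℕ → ℝ} (ha : StrictMono a) (m i : ℕ) :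
    0 < (-1) ^ (m - i) * ∏ k ∈ (Finset.Icc 1 m).erase i, (a i - a k) := by
  rw [← Finset.prod_filter_mul_prod_filter_not _ (· < i)]
  have hright : ((Finset.Icc 1 m).erase i).filter (fun k => ¬ k < i) = Finset.Ioc i m := by
    ext k; simp only [Finset.mem_filter, Finset.mem_erase, Finset.mem_Icc, Finset.mem_Ioc]; omega
  have hneg : (-1 : ℝ) ^ (m - i) * ∏ k ∈ Finset.Ioc i m, (a i - a k)
      = ∏ k ∈ Finset.Ioc i m, (a k - a i) := by
    rw [← Nat.card_Ioc, ← Finset.prod_neg]; simp only [neg_sub]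
  rw [hright, mul_left_comm, hneg]
  refine mul_pos (Finset.prod_pos fun k hk => ?_) (Finset.prod_pos fun k hk => ?_)
  · exact sub_pos.mpr (ha (Finset.mem_filter.mp hk).2)
  · exact sub_pos.mpr (ha (Finset.mem_Ioc.mp hk).1)

theorem exists_pos_forall_abs_pow_mul_lt_one (a : ℝ) {n : ℕ} (hn : n ≠ 0) :
    ∃ ε₁ > (0 : ℝ), ∀ ε : ℝ, 0 < ε → ε < ε₁ → |ε ^ n * a| < 1 := by
  have hlim : Tendsto (fun ε : ℝ => |ε ^ n * a|) (𝓝 0) (𝓝 0) := by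
    simpa [hn] using ((continuous_pow n).mul continuous_const).abs.tendsto (0 : ℝ)
  obtain ⟨ε₁, hε₁, hsub⟩ := mem_nhdsGT_iff_exists_Ioo_subset.mp
    (nhdsWithin_le_nhds (hlim.eventually (gt_mem_nhds zero_lt_one)))
  exact ⟨ε₁, hε₁, fun ε hε hεε₁ => hsub ⟨hε, hεε₁⟩⟩

theorem eq_one_sub_div_one_add {A d : ℝ} (h : 1 - A = (1 + A) * d) : d = (1 - A) / (1 + A) := by
  have hA : 1 + A ≠ 0 := fun h0 => by
    rw [h0, zero_mul] at h
    linarith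
  rw [h, mul_div_cancel_left₀ _ hA]

theorem one_sub_div_one_add_mem_Ioo {A : ℝ} (h0 : 0 < A) (h1 : A < 1) :
    (1 - A) / (1 + A) ∈ Ioo 0 1 :=
  ⟨div_pos (by linarith) (by linarith), (div_lt_one (by linarith)).mpr (by linarith)⟩

theorem one_lt_one_sub_div_one_add {A : ℝ} (h0 : A < 0) (h1 : -1 < A) :
    1 < (1 - A) / (1 + A) := by
  rw [lt_div_iff₀ (by linarith)]; linarith

def rootGapProd (m i : ℕ) : ℝ :=
  ∏ k ∈ (Finset.Icc 1 m).erase i, (((i : ℝ) / (m : ℝ)) ^ 2 - ((k : ℝ) / (m : ℝ)) ^ 2)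

theorem neg_one_pow_mul_rootGapProd_pos {m : ℕ} (hm : 0 < m) (i : ℕ) :
    0 < (-1) ^ (m - i) * rootGapProd m i :=
  neg_one_pow_mul_prod_erase_sub_pos (a := fun k : ℕ => ((k : ℝ) / m) ^ 2)
    (fun k l hkl => by dsimp only; gcongr) m i

theorem hasDerivAt_fPol_of_mem {m i : ℕ} (hi : i ∈ Finset.Icc 1 m) (ε : ℝ) :
    HasDerivAt (fun x => fPol m x ε) (2 * ((i : ℝ) / m) ^ 2 * ε ^ (2 * m) * rootGapProd m i)
      ((i : ℝ) * ε / m) := by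
  set c : ℝ := (i : ℝ) * ε / m
  have hfac : ∀ k ∈ Finset.Icc 1 m,
      HasDerivAt (fun x => x ^ 2 - ((k : ℝ) * ε / m) ^ 2) (2 * c) c := fun k _ => by
    simpa using (hasDerivAt_pow 2 c).sub_const (((k : ℝ) * ε / m) ^ 2)
  have hprod := HasDerivAt.finsetProd_of_eq_zero hi hfac (sub_self _)
  have hm : 1 ≤ m := (Finset.mem_Icc.mp hi).1.trans (Finset.mem_Icc.mp hi).2
  have hcard : ((Finset.Icc 1 m).erase i).card = m - 1 := by
    rw [Finset.card_erase_of_mem hi, Nat.card_Icc, Nat.add_sub_cancel]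
  have hgap : ∏ k ∈ (Finset.Icc 1 m).erase i, (c ^ 2 - ((k : ℝ) * ε / m) ^ 2)
      = (ε ^ 2) ^ (m - 1) * rootGapProd m i := by
    rw [rootGapProd, ← hcard, ← Finset.prod_const, ← Finset.prod_mul_distrib]
    exact Finset.prod_congr rfl fun k _ => by ring
  refine ((hasDerivAt_id' c).mul hprod).congr_deriv ?_
  rw [Finset.prod_eq_zero hi (sub_self _), hgap, smul_eq_mul,
    show 2 * m = 2 * (m - 1) + 2 by omega, pow_add, pow_mul]
  ring

theorem deriv_eq_of_energy_balance {m i : ℕ} (hi : i ∈ Finset.Icc 1 m) {ε : ℝ} (hε : 0 < ε)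
    {P : ℝ → ℝ} (hP : DifferentiableAt ℝ P ((i : ℝ) * ε / m))
    (hPc : P ((i : ℝ) * ε / m) = (i : ℝ) * ε / m)
    (heq : ∀ᶠ x in 𝓝 ((i : ℝ) * ε / m),
      (1 / 2) * x ^ 2 - ε * fPol m x ε = (1 / 2) * (P x) ^ 2 + ε * fPol m (P x) ε) :
    deriv P ((i : ℝ) * ε / m) =
      (1 - 2 * ε ^ (2 * m) * ((i : ℝ) / m) * rootGapProd m i) /
        (1 + 2 * ε ^ (2 * m) * ((i : ℝ) / m) * rootGapProd m i) := by
  set c : ℝ := (i : ℝ) * ε / m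
  set A : ℝ := 2 * ε ^ (2 * m) * ((i : ℝ) / m) * rootGapProd m i
  obtain ⟨hi1, him⟩ := Finset.mem_Icc.mp hi
  have hc : 0 < c := by
    have : (0 : ℝ) < i := by exact_mod_cast hi1
    have : (0 : ℝ) < m := by exact_mod_cast hi1.trans him
    positivity
  have hF := hasDerivAt_fPol_of_mem hi ε
  have hεF : ε * (2 * ((i : ℝ) / m) ^ 2 * ε ^ (2 * m) * rootGapProd m i) = c * A := by ring
  have hsq : HasDerivAt (fun x : ℝ => 1 / 2 * x ^ 2) c c := by
    simpa using (hasDerivAt_pow 2 c).const_mul (1 / 2 : ℝ)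
  have hL : HasDerivAt (fun x => 1 / 2 * x ^ 2 - ε * fPol m x ε) (c * (1 - A)) c := by
    rw [mul_one_sub, ← hεF]; exact hsq.sub (hF.const_mul ε)
  have hR : HasDerivAt (fun y => 1 / 2 * y ^ 2 + ε * fPol m y ε) (c * (1 + A)) (P c) := by
    rw [hPc, mul_one_add, ← hεF]; exact hsq.add (hF.const_mul ε)
  have hbal := eq_mul_deriv_of_eventuallyEq_comp hL hR hP heq
  rw [mul_assoc] at hbal
  exact eq_one_sub_div_one_add (mul_left_cancel₀ hc.ne' hbal)

theorem stmt15_general (m : ℕ) (i : ℕ) (hi1 : 1 ≤ i) (him : i ≤ m) :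
    (∀ ε : ℝ, 0 < ε → ∀ P : ℝ → ℝ,
      DifferentiableAt ℝ P ((i : ℝ) * ε / (m : ℝ)) →
      P ((i : ℝ) * ε / (m : ℝ)) = (i : ℝ) * ε / (m : ℝ) →
      (∀ᶠ x in nhds ((i : ℝ) * ε / (m : ℝ)), 0 < P x) →
      (∀ᶠ x in nhds ((i : ℝ) * ε / (m : ℝ)),
        (1 / 2) * x ^ 2 - ε * fPol m x ε =
          (1 / 2) * (P x) ^ 2 + ε * fPol m (P x) ε) →
      deriv P ((i : ℝ) * ε / (m : ℝ)) =
        (1 - 2 * ε ^ (2 * m) * ((i : ℝ) / (m : ℝ)) *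
            ∏ k ∈ (Finset.Icc 1 m).erase i,
              (((i : ℝ) / (m : ℝ)) ^ 2 - ((k : ℝ) / (m : ℝ)) ^ 2)) /
        (1 + 2 * ε ^ (2 * m) * ((i : ℝ) / (m : ℝ)) *
            ∏ k ∈ (Finset.Icc 1 m).erase i,
              (((i : ℝ) / (m : ℝ)) ^ 2 - ((k : ℝ) / (m : ℝ)) ^ 2))) ∧
    ∃ ε₁ > (0 : ℝ), ∀ ε : ℝ, 0 < ε → ε < ε₁ → ∀ P : ℝ → ℝ,
      DifferentiableAt ℝ P ((i : ℝ) * ε / (m : ℝ)) →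
      P ((i : ℝ) * ε / (m : ℝ)) = (i : ℝ) * ε / (m : ℝ) →
      (∀ᶠ x in nhds ((i : ℝ) * ε / (m : ℝ)), 0 < P x) →
      (∀ᶠ x in nhds ((i : ℝ) * ε / (m : ℝ)),
        (1 / 2) * x ^ 2 - ε * fPol m x ε =
          (1 / 2) * (P x) ^ 2 + ε * fPol m (P x) ε) →
      deriv P ((i : ℝ) * ε / (m : ℝ)) ≠ 1 ∧
      (Even (m - i) → 0 < deriv P ((i : ℝ) * ε / (m : ℝ)) ∧
        deriv P ((i : ℝ) * ε / (m : ℝ)) < 1) ∧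
      (Odd (m - i) → 1 < deriv P ((i : ℝ) * ε / (m : ℝ))) := by
  have hi : i ∈ Finset.Icc 1 m := Finset.mem_Icc.mpr ⟨hi1, him⟩
  have hm : 0 < m := hi1.trans him
  refine ⟨fun ε hε P hP hPc _ heq => deriv_eq_of_energy_balance hi hε hP hPc heq, ?_⟩
  have hsign := neg_one_pow_mul_rootGapProd_pos hm i
  obtain ⟨ε₁, hε₁, hsmall⟩ :=
    exists_pos_forall_abs_pow_mul_lt_one (2 * ((i : ℝ) / m) * rootGapProd m i) (n := 2 * m)
      (by omega)
  refine ⟨ε₁, hε₁, fun ε hε hεε₁ P hP hPc _ heq => ?_⟩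
  rw [deriv_eq_of_energy_balance hi hε hP hPc heq]
  set A : ℝ := 2 * ε ^ (2 * m) * ((i : ℝ) / m) * rootGapProd m i
  obtain ⟨hA₀, hA₁⟩ := abs_lt.mp (show |A| < 1 by convert hsmall ε hε hεε₁ using 2; ring)
  have hcoef : 0 < 2 * ε ^ (2 * m) * ((i : ℝ) / m) := by positivity
  rcases Nat.even_or_odd (m - i) with he | ho
  · rw [he.neg_one_pow, one_mul] at hsign
    obtain ⟨h0, h1⟩ := one_sub_div_one_add_mem_Ioo (mul_pos hcoef hsign) hA₁
    exact ⟨h1.ne, fun _ => ⟨h0, h1⟩, fun ho => absurd he (Nat.not_even_iff_odd.mpr ho)⟩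
  · rw [ho.neg_one_pow, neg_one_mul, neg_pos] at hsign
    have h1 := one_lt_one_sub_div_one_add (mul_neg_of_pos_of_neg hcoef hsign) hA₀
    exact ⟨h1.ne', fun he => absurd he (Nat.not_even_iff_odd.mpr ho), fun _ => h1⟩

/-- Derivative of the Poincaré map of `Z^f_ε` at its fixed point `iε/m`, and the
resulting hyperbolicity and stability of the corresponding limit cycle for small
`ε > 0`. -/
theorem stmt15 (m : ℕ) (hm : 0 < m) (i : ℕ) (hi1 : 1 ≤ i) (him : i ≤ m) :
    (∀ ε : ℝ, 0 < ε → ∀ P : ℝ → ℝ,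
      DifferentiableAt ℝ P ((i : ℝ) * ε / (m : ℝ)) →
      P ((i : ℝ) * ε / (m : ℝ)) = (i : ℝ) * ε / (m : ℝ) →
      (∀ᶠ x in nhds ((i : ℝ) * ε / (m : ℝ)), 0 < P x) →
      (∀ᶠ x in nhds ((i : ℝ) * ε / (m : ℝ)),
        (1 / 2) * x ^ 2 - ε * fPol m x ε =
          (1 / 2) * (P x) ^ 2 + ε * fPol m (P x) ε) →
      deriv P ((i : ℝ) * ε / (m : ℝ)) =
        (1 - 2 * ε ^ (2 * m) * ((i : ℝ) / (m : ℝ)) *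
            ∏ k ∈ (Finset.Icc 1 m).erase i,
              (((i : ℝ) / (m : ℝ)) ^ 2 - ((k : ℝ) / (m : ℝ)) ^ 2)) /
        (1 + 2 * ε ^ (2 * m) * ((i : ℝ) / (m : ℝ)) *
            ∏ k ∈ (Finset.Icc 1 m).erase i,
              (((i : ℝ) / (m : ℝ)) ^ 2 - ((k : ℝ) / (m : ℝ)) ^ 2))) ∧
    ∃ ε₁ > (0 : ℝ), ∀ ε : ℝ, 0 < ε → ε < ε₁ → ∀ P : ℝ → ℝ,
      DifferentiableAt ℝ P ((i : ℝ) * ε / (m : ℝ)) →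
      P ((i : ℝ) * ε / (m : ℝ)) = (i : ℝ) * ε / (m : ℝ) →
      (∀ᶠ x in nhds ((i : ℝ) * ε / (m : ℝ)), 0 < P x) →
      (∀ᶠ x in nhds ((i : ℝ) * ε / (m : ℝ)),
        (1 / 2) * x ^ 2 - ε * fPol m x ε =
          (1 / 2) * (P x) ^ 2 + ε * fPol m (P x) ε) →
      deriv P ((i : ℝ) * ε / (m : ℝ)) ≠ 1 ∧
      (Even (m - i) → 0 < deriv P ((i : ℝ) * ε / (m : ℝ)) ∧
        deriv P ((i : ℝ) * ε / (m : ℝ)) < 1) ∧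
      (Odd (m - i) → 1 < deriv P ((i : ℝ) * ε / (m : ℝ))) :=
  stmt15_general m i hi1 him
end
end
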